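/- arXiv:2406.12989 — 2 statements merged into one kernel-verified Lean document; each statement's English description precedes it below -/
import Mathlib

section
/- Let T be the complete q-ary tree of depth d (q ≥ 2, d ≥ 1) and let S ⊆ V(T). If there exists U ⊆ V(T) with U < S, then S contains a swappable pair; moreover, there is a swappable pair u, v in some level i of S such that every level j < i of S is left-ordered, and the treeswap S' of S between u and v satisfies S' < S. -/
open scoped Classical

/-- A vertex of the complete `q`-ary tree of depth `d`: a sequence over `Fin q`
of length at most `d`. -/
def QV (q d : ℕ) : Type := {l : List (Fin q) // l.length ≤ d}

instance (q d : ℕ) : Finite (QV q d) :=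
  (List.finite_length_le (Fin q) d).to_subtype

/-- The complete `q`-ary tree of depth `d`: two vertices are adjacent exactly when
one is obtained from the other by appending a single element. -/
def qTree (q d : ℕ) : SimpleGraph (QV q d) where
  Adj u v := (∃ a : Fin q, v.val = u.val ++ [a]) ∨ (∃ a : Fin q, u.val = v.val ++ [a])
  symm := by constructor; intro u v h; tauto
  loopless := by
    constructor
    rintro u (⟨a, ha⟩ | ⟨a, ha⟩) <;>
    · have := congrArg List.length ha
      simp at this

/-- The vertex border `δ(S)`: vertices outside `S` with a neighbour in `S`. -/
def vertexBorder {V : Type*} (G : SimpleGraph V) (S : Set V) : Set V :=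
  {v | v ∉ S ∧ ∃ u ∈ S, G.Adj u v}

/-- `Φ_V(G, s)`: the minimum border size over vertex sets of size `s`. -/
noncomputable def isoProfile {V : Type*} (G : SimpleGraph V) (s : ℕ) : ℕ :=
  sInf ((fun S => (vertexBorder G S).ncard) '' {S : Set V | S.ncard = s})

/-- `Φ_V(G)`: the vertex-isoperimetric peak, `max_{0 ≤ s ≤ |V|} Φ_V(G, s)`. -/
noncomputable def isoPeak {V : Type*} (G : SimpleGraph V) : ℕ :=
  sSup (isoProfile G '' Set.Icc 0 (Nat.card V))

/-- The vertex separation number: for each linear layout (a bijection from the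
vertices to `{1, …, |V|}`, here modelled as `V ≃ Fin |V|`) take the maximum
border size of its prefix sets, then minimize over layouts. -/
noncomputable def vsNum {V : Type*} (G : SimpleGraph V) : ℕ :=
  sInf {n | ∃ L : V ≃ Fin (Nat.card V),
    n = sSup {m | ∃ i : Fin (Nat.card V),
      m = (vertexBorder G {u | (L u : ℕ) ≤ (i : ℕ)}).ncard}}

namespace QV

variable {q d : ℕ}

/-- Level `i`: vertices at distance `i` from the root. -/
def level (q d : ℕ) (i : ℕ) : Set (QV q d) := {w | w.val.length = i}

/-- Descendants of `u` (including `u` itself). -/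
def desc (u : QV q d) : Set (QV q d) := {w | u.val <+: w.val}

/-- `w` is a child of `u`. -/
def IsChildOf (w u : QV q d) : Prop := ∃ a : Fin q, w.val = u.val ++ [a]

/-- `u` is to the left of `v`: same level and lexicographically smaller. -/
def LeftOf (u v : QV q d) : Prop :=
  u.val.length = v.val.length ∧ List.Lex (· < ·) u.val v.val

/-- `u` precedes `v` in the breadth-first ordering of the tree. -/
def Precedes (u v : QV q d) : Prop :=
  u.val.length < v.val.length ∨
    (u.val.length = v.val.length ∧ List.Lex (· < ·) u.val v.val)

/-- `u, v` are swappable in `S`. -/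
def Swappable (S : Set (QV q d)) (u v : QV q d) : Prop :=
  LeftOf u v ∧ ((u ∉ S ∧ v ∈ S) ∨
    (u ∉ S ∧ v ∉ S ∧ (∀ w, IsChildOf w u → w ∉ S) ∧ (∃ w, IsChildOf w v ∧ w ∈ S)))

/-- Level `i` of `S` is left-ordered: no swappable pair in level `i`. -/
def LevelLeftOrdered (S : Set (QV q d)) (i : ℕ) : Prop :=
  ∀ u v : QV q d, u.val.length = i → ¬ Swappable S u v

/-- `S` is left-ordered: every level is left-ordered. -/
def LeftOrdered (S : Set (QV q d)) : Prop := ∀ i, LevelLeftOrdered S i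

/-- The canonical map used in a treeswap between `u` and `v`: a descendant of `u`
is sent to the corresponding descendant of `v` (same suffix), and vice versa;
other vertices are fixed. -/
noncomputable def swapAt (u v w : QV q d) : QV q d :=
  if h : u.val <+: w.val ∧ (v.val ++ w.val.drop u.val.length).length ≤ d then
    ⟨v.val ++ w.val.drop u.val.length, h.2⟩
  else if h' : v.val <+: w.val ∧ (u.val ++ w.val.drop v.val.length).length ≤ d then
    ⟨u.val ++ w.val.drop v.val.length, h'.2⟩
  else w

/-- The treeswap of `S` between `u` and `v`. -/
noncomputable def treeswap (S : Set (QV q d)) (u v : QV q d) : Set (QV q d) :=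
  {w | swapAt u v w ∈ S}

/-- The strict partial order `A < B` on subsets of the tree. -/
def SetPrec (A B : Set (QV q d)) : Prop :=
  (∀ i, (A ∩ level q d i).ncard = (B ∩ level q d i).ncard) ∧
  ∃ v, v ∈ A ∧ v ∉ B ∧ ∀ w, Precedes w v → (w ∈ A ↔ w ∈ B)

/-- `S` is down-compressed. -/
def DownCompressed (S : Set (QV q d)) : Prop :=
  ∀ u ∈ S, ∀ v ∉ S,
    (vertexBorder (qTree q d) S).ncard ≤
      (vertexBorder (qTree q d) ((S ∪ {v}) \ {u})).ncard ∧
    (u.val.length < v.val.length →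
      (vertexBorder (qTree q d) S).ncard <
        (vertexBorder (qTree q d) ((S ∪ {v}) \ {u})).ncard)

/-- `S'` is an aeolian compression of `S`. -/
def IsAeolianCompression (S S' : Set (QV q d)) : Prop :=
  ∃ u v : QV q d, LeftOf u v ∧
    ∃ R A : Set (QV q d), R.Nonempty ∧ R ⊆ S ∧ R ⊆ desc v ∧
      A ⊆ desc u ∧ Disjoint A S ∧ A.ncard = R.ncard ∧
      S' = (S \ R) ∪ A ∧
      S'.ncard = S.ncard ∧
      (vertexBorder (qTree q d) S').ncard ≤ (vertexBorder (qTree q d) S).ncard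

/-- `S` is aeolian-compressed. -/
def AeolianCompressed (S : Set (QV q d)) : Prop :=
  LeftOrdered S ∧ DownCompressed S ∧ ∀ S', ¬ IsAeolianCompression S S'

end QV

/-!
If `U < S`, let `v₀` be the first vertex at which they differ; it lies in `U \ S`. Since `U` and
`S` have equally many vertices in the level of `v₀`, some `x ∈ S \ U` lies in that level, and `x`
cannot precede `v₀`, so `(v₀, x)` is swappable. For a swappable pair `(u, v)` the treeswap `S'`
first differs from `S` at a vertex of `S' \ S`: at `u` if `u ∉ S ∋ v`, and otherwise at the child
`u·a`, where `v·a` is the leftmost child of `v` in `S`. Every vertex preceding it either lies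
outside `Desc(u) ∪ Desc(v)`, where `S'` agrees with `S`, or is one of `u`, `v` and the left
siblings `u·b` (`b < a`), which lie neither in `S` nor in `S'`. Taking the pair in the lowest level
that is not left-ordered gives the second claim.
-/

theorem List.lex_append_left_iff {α : Type*} {r : α → α → Prop} [Std.Irrefl r]
    (l : List α) {s t : List α} : List.Lex r (l ++ s) (l ++ t) ↔ List.Lex r s t := by
  induction l with
  | nil => rfl
  | cons a l ih => exact List.lex_cons_iff.trans ih

theorem List.Lex.append_of_length_eq {α : Type*} {r : α → α → Prop} {l₁ l₂ : List α}
    (h : List.Lex r l₁ l₂) (hlen : l₁.length = l₂.length) (t₁ t₂ : List α) :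
    List.Lex r (l₁ ++ t₁) (l₂ ++ t₂) := by
  induction h with
  | nil => simp at hlen
  | rel hab => exact List.Lex.rel hab
  | cons _ ih => exact List.Lex.cons (ih (by simpa using hlen))

namespace QV

variable {q d : ℕ}

section SwapAt

variable {u v w : QV q d} {t : List (Fin q)}

lemma swapAt_val_of_eq_append_left (hlen : u.val.length = v.val.length)
    (hw : w.val = u.val ++ t) : (swapAt u v w).val = v.val ++ t := by
  have hd : (v.val ++ w.val.drop u.val.length).length ≤ d := by
    simpa [hw, hlen] using w.2
  calc (swapAt u v w).val = v.val ++ w.val.drop u.val.length :=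
        congrArg Subtype.val (dif_pos ⟨⟨t, hw.symm⟩, hd⟩ : swapAt u v w = ⟨_, hd⟩)
    _ = v.val ++ t := by rw [hw, List.drop_left]

lemma swapAt_val_of_eq_append_right (hlen : u.val.length = v.val.length)
    (hw : w.val = v.val ++ t) : (swapAt u v w).val = u.val ++ t := by
  by_cases hu : u.val <+: w.val
  · have huv : u.val = v.val :=
      (List.prefix_of_prefix_length_le hu ⟨t, hw.symm⟩ hlen.le).eq_of_length hlen
    rw [swapAt_val_of_eq_append_left hlen (huv ▸ hw), huv]
  · have hd : (u.val ++ w.val.drop v.val.length).length ≤ d := by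
      simpa [hw, hlen] using w.2
    calc (swapAt u v w).val = u.val ++ w.val.drop v.val.length :=
          congrArg Subtype.val ((dif_neg fun h => hu h.1).trans (dif_pos ⟨⟨t, hw.symm⟩, hd⟩) :
            swapAt u v w = ⟨_, hd⟩)
      _ = u.val ++ t := by rw [hw, List.drop_left]

lemma swapAt_of_not_prefix (hu : ¬ u.val <+: w.val) (hv : ¬ v.val <+: w.val) :
    swapAt u v w = w :=
  (dif_neg fun h => hu h.1).trans (dif_neg fun h => hv h.1)

lemma length_swapAt (hlen : u.val.length = v.val.length) (w : QV q d) :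
    (swapAt u v w).val.length = w.val.length := by
  by_cases hu : u.val <+: w.val
  · obtain ⟨s, hs⟩ := hu
    simp [swapAt_val_of_eq_append_left hlen hs.symm, ← hs, hlen]
  by_cases hv : v.val <+: w.val
  · obtain ⟨s, hs⟩ := hv
    simp [swapAt_val_of_eq_append_right hlen hs.symm, ← hs, hlen]
  rw [swapAt_of_not_prefix hu hv]

lemma swapAt_involutive (hlen : u.val.length = v.val.length) :
    Function.Involutive (swapAt u v) := by
  intro w
  apply Subtype.ext
  by_cases hu : u.val <+: w.val
  · obtain ⟨s, hs⟩ := hu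
    rw [swapAt_val_of_eq_append_right hlen (swapAt_val_of_eq_append_left hlen hs.symm), hs]
  by_cases hv : v.val <+: w.val
  · obtain ⟨s, hs⟩ := hv
    rw [swapAt_val_of_eq_append_left hlen (swapAt_val_of_eq_append_right hlen hs.symm), hs]
  rw [swapAt_of_not_prefix hu hv, swapAt_of_not_prefix hu hv]

end SwapAt

section Treeswap

variable {S : Set (QV q d)} {u v w c : QV q d} {t : List (Fin q)}

lemma mem_treeswap_iff_of_eq_append_left (hlen : u.val.length = v.val.length)
    (hw : w.val = u.val ++ t) (hc : c.val = v.val ++ t) : w ∈ treeswap S u v ↔ c ∈ S := by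
  rw [treeswap, Set.mem_ofPred_eq,
    Subtype.ext ((swapAt_val_of_eq_append_left hlen hw).trans hc.symm)]

lemma mem_treeswap_iff_of_eq_append_right (hlen : u.val.length = v.val.length)
    (hw : w.val = v.val ++ t) (hc : c.val = u.val ++ t) : w ∈ treeswap S u v ↔ c ∈ S := by
  rw [treeswap, Set.mem_ofPred_eq,
    Subtype.ext ((swapAt_val_of_eq_append_right hlen hw).trans hc.symm)]

lemma mem_treeswap_iff_of_not_prefix (hu : ¬ u.val <+: w.val) (hv : ¬ v.val <+: w.val) :
    w ∈ treeswap S u v ↔ w ∈ S := by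
  rw [treeswap, Set.mem_ofPred_eq, swapAt_of_not_prefix hu hv]

lemma left_mem_treeswap_iff (hlen : u.val.length = v.val.length) :
    u ∈ treeswap S u v ↔ v ∈ S :=
  mem_treeswap_iff_of_eq_append_left hlen u.val.append_nil.symm v.val.append_nil.symm

lemma right_mem_treeswap_iff (hlen : u.val.length = v.val.length) :
    v ∈ treeswap S u v ↔ u ∈ S :=
  mem_treeswap_iff_of_eq_append_right hlen v.val.append_nil.symm u.val.append_nil.symm

lemma ncard_treeswap_inter_level (S : Set (QV q d)) (hlen : u.val.length = v.val.length)
    (i : ℕ) : (treeswap S u v ∩ level q d i).ncard = (S ∩ level q d i).ncard := by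
  have hinv := swapAt_involutive hlen
  have himage : treeswap S u v ∩ level q d i = swapAt u v '' (S ∩ level q d i) := by
    rw [Set.image_eq_preimage_of_inverse hinv.leftInverse hinv.rightInverse]
    ext w
    simp [treeswap, level, length_swapAt hlen]
  rw [himage, Set.ncard_image_of_injective _ hinv.injective]

end Treeswap

section Precedes

variable {u v w x : QV q d} {l s t : List (Fin q)}

lemma Precedes.length_le (h : Precedes w x) : w.val.length ≤ x.val.length := by
  rcases h with h | h <;> omega

lemma Precedes.suffix_of_eq_append (h : Precedes w x) (hw : w.val = l ++ s)
    (hx : x.val = l ++ t) :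
    s.length < t.length ∨ (s.length = t.length ∧ List.Lex (· < ·) s t) := by
  rw [Precedes, hw, hx, List.lex_append_left_iff] at h
  simpa using h

lemma Precedes.length_lt_of_leftOf (h : Precedes w x) (huv : LeftOf u v)
    (hw : w.val = v.val ++ s) (hx : x.val = u.val ++ t) : s.length < t.length := by
  obtain ⟨hlen, hlex⟩ := huv
  have hle : s.length ≤ t.length := by simpa [hw, hx, hlen] using h.length_le
  refine hle.lt_of_ne fun hst => ?_
  rcases h with h | ⟨-, hwx⟩
  · simp [hw, hx, hlen, hst] at h
  · rw [hw, hx] at hwx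
    exact asymm hwx (hlex.append_of_length_eq hlen t s)

end Precedes

def IsFirstDifference (A B : Set (QV q d)) (x : QV q d) : Prop :=
  x ∈ A ∧ x ∉ B ∧ ∀ w, Precedes w x → (w ∈ A ↔ w ∈ B)

section SwappableTreeswap

variable {S : Set (QV q d)} {u v : QV q d}

lemma isFirstDifference_treeswap_of_notMem_of_mem (huv : LeftOf u v) (hu : u ∉ S)
    (hv : v ∈ S) : IsFirstDifference (treeswap S u v) S u := by
  refine ⟨(left_mem_treeswap_iff huv.1).2 hv, hu, fun w hw => ?_⟩
  have hwu : ¬ u.val <+: w.val := fun ⟨s, hs⟩ => by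
    simpa using hw.suffix_of_eq_append hs.symm u.val.append_nil.symm
  have hwv : ¬ v.val <+: w.val := fun ⟨s, hs⟩ => by
    simpa using hw.length_lt_of_leftOf huv hs.symm u.val.append_nil.symm
  exact mem_treeswap_iff_of_not_prefix hwu hwv

lemma isFirstDifference_treeswap_of_child (huv : LeftOf u v) (hu : u ∉ S) (hv : v ∉ S)
    (hchild : ∀ w, IsChildOf w u → w ∉ S) {a : Fin q} {x c : QV q d}
    (hx : x.val = u.val ++ [a]) (hc : c.val = v.val ++ [a]) (hcS : c ∈ S)
    (hmin : ∀ b < a, ∀ c' : QV q d, c'.val = v.val ++ [b] → c' ∉ S) :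
    IsFirstDifference (treeswap S u v) S x := by
  refine ⟨(mem_treeswap_iff_of_eq_append_left huv.1 hx hc).2 hcS, hchild x ⟨a, hx⟩,
    fun w hw => ?_⟩
  by_cases hwu : u.val <+: w.val
  · obtain ⟨s, hs⟩ := hwu
    rcases hw.suffix_of_eq_append hs.symm hx with hlt | ⟨hlen, hlex⟩
    · obtain rfl : s = [] := by simpa using hlt
      obtain rfl : w = u := Subtype.ext (by simpa using hs.symm)
      exact iff_of_false (fun h => hv ((left_mem_treeswap_iff huv.1).1 h)) hu
    · obtain ⟨b, rfl⟩ := List.length_eq_one_iff.mp hlen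
      have hba : b < a := (List.lex_singleton_iff b a).mp hlex
      refine iff_of_false (fun h => hmin b hba _ ?_ h) (hchild w ⟨b, hs.symm⟩)
      exact swapAt_val_of_eq_append_left huv.1 hs.symm
  by_cases hwv : v.val <+: w.val
  · obtain ⟨s, hs⟩ := hwv
    obtain rfl : s = [] := by simpa using hw.length_lt_of_leftOf huv hs.symm hx
    obtain rfl : w = v := Subtype.ext (by simpa using hs.symm)
    exact iff_of_false (fun h => hu ((right_mem_treeswap_iff huv.1).1 h)) hv
  exact mem_treeswap_iff_of_not_prefix hwu hwv

lemma exists_isFirstDifference_treeswap (h : Swappable S u v) :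
    ∃ x, IsFirstDifference (treeswap S u v) S x := by
  obtain ⟨huv, ⟨hu, hv⟩ | ⟨hu, hv, hchild, c₀, ⟨a₀, hc₀⟩, hc₀S⟩⟩ := h
  · exact ⟨u, isFirstDifference_treeswap_of_notMem_of_mem huv hu hv⟩
  obtain ⟨a, ⟨c, hc, hcS⟩, hmin⟩ := wellFounded_lt.has_min
    {a : Fin q | ∃ c : QV q d, c.val = v.val ++ [a] ∧ c ∈ S} ⟨a₀, c₀, hc₀, hc₀S⟩
  have hd : (u.val ++ [a]).length ≤ d := by simpa [hc, huv.1] using c.2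
  exact ⟨⟨_, hd⟩, isFirstDifference_treeswap_of_child huv hu hv hchild rfl hc hcS
    fun b hba c' hc' hc'S => hmin b ⟨c', hc', hc'S⟩ hba⟩

lemma Swappable.setPrec_treeswap (h : Swappable S u v) : SetPrec (treeswap S u v) S :=
  ⟨ncard_treeswap_inter_level S h.1.1, exists_isFirstDifference_treeswap h⟩

end SwappableTreeswap

lemma SetPrec.exists_swappable {U S : Set (QV q d)} (hUS : SetPrec U S) :
    ∃ u v, Swappable S u v := by
  obtain ⟨hcard, v₀, hv₀U, hv₀S, hagree⟩ := hUS
  obtain ⟨x, hxS, hxU, hlen⟩ : ∃ x ∈ S, x ∉ U ∧ x.val.length = v₀.val.length := by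
    by_contra! h
    have hsub : S ∩ level q d v₀.val.length ⊆ U ∩ level q d v₀.val.length :=
      fun x ⟨hxS, hx⟩ => ⟨by_contra fun hxU => h x hxS hxU hx, hx⟩
    have heq := Set.eq_of_subset_of_ncard_le hsub (hcard _).le (Set.toFinite _)
    exact hv₀S (heq ▸ ⟨hv₀U, rfl⟩ : v₀ ∈ S ∩ level q d v₀.val.length).1
  have hlex : List.Lex (· < ·) v₀.val x.val := by
    rcases lt_trichotomy x.val v₀.val with hlt | heq | hgt
    · exact absurd ((hagree x (Or.inr ⟨hlen, hlt⟩)).2 hxS) hxU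
    · exact absurd (Subtype.ext heq ▸ hxS) hv₀S
    · exact hgt
  exact ⟨v₀, x, ⟨hlen.symm, hlex⟩, Or.inl ⟨hv₀S, hxS⟩⟩

end QV

theorem exists_swappable_treeswap_decreases_general (q d : ℕ)
    (S : Set (QV q d)) (hU : ∃ U : Set (QV q d), QV.SetPrec U S) :
    (∃ u v : QV q d, QV.Swappable S u v) ∧
    ∃ (u v : QV q d) (i : ℕ), u ∈ QV.level q d i ∧ v ∈ QV.level q d i ∧
      QV.Swappable S u v ∧
      (∀ j < i, QV.LevelLeftOrdered S j) ∧
      QV.SetPrec (QV.treeswap S u v) S := by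
  obtain ⟨U, hUS⟩ := hU
  obtain ⟨u₀, v₀, h₀⟩ := hUS.exists_swappable
  have hex : ∃ i, ¬ QV.LevelLeftOrdered S i := ⟨u₀.val.length, fun h => h u₀ v₀ rfl h₀⟩
  obtain ⟨u, v, hu, huv⟩ : ∃ u v : QV q d, u.val.length = Nat.find hex ∧ QV.Swappable S u v := by
    simpa [QV.LevelLeftOrdered] using Nat.find_spec hex
  exact ⟨⟨u₀, v₀, h₀⟩, u, v, Nat.find hex, hu, huv.1.1.symm.trans hu, huv,
    fun j hj => not_not.mp (Nat.find_min hex hj), huv.setPrec_treeswap⟩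

theorem exists_swappable_treeswap_decreases (q d : ℕ) (hq : 2 ≤ q) (hd : 1 ≤ d)
    (S : Set (QV q d)) (hU : ∃ U : Set (QV q d), QV.SetPrec U S) :
    (∃ u v : QV q d, QV.Swappable S u v) ∧
    ∃ (u v : QV q d) (i : ℕ), u ∈ QV.level q d i ∧ v ∈ QV.level q d i ∧
      QV.Swappable S u v ∧
      (∀ j < i, QV.LevelLeftOrdered S j) ∧
      QV.SetPrec (QV.treeswap S u v) S :=
  exists_swappable_treeswap_decreases_general q d S hU
end

section
/- Let T be the complete q-ary tree of depth d (q ≥ 2, d ≥ 1) and let S ⊆ V(T) be left-ordered and down-compressed. Then for every vertex u ∈ S, one of the following holds: (1) all children of u are in S; (2) exactly one child of u, say v, is not in S, and v has at least one child not in S; or (3) exactly two children of u, say v₁ and v₂, are not in S, where v₁ has at least one child in S and at least one child not in S, and v₂ has no children in S. -/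
open scoped Classical

/-!
Down-compression says that moving a vertex `u ∈ S` out of `S` and a deeper vertex `w ∉ S` into it
strictly enlarges the border. When every child of `w` lies in `S`, such a move adds at most `u`
and the parent of `w` to the border, so it is impossible as soon as it also removes two border
vertices (or one, when `w` is a child of `u`). Hence every child of `u` outside `S` has a child
outside `S`; and if two children of `u` had no children in `S`, a deepest vertex outside `S` below
the level of `u` would have to have a child outside `S`. Left-ordering forces every child outside
`S` except the leftmost to have no children in `S`, since the leftmost one has a child outside `S`.
-/

theorem vertexBorder_swap_subset {V : Type*} (G : SimpleGraph V) (S : Set V) (u w : V) :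
    vertexBorder G ((S ∪ {w}) \ {u}) ⊆
      insert u ((vertexBorder G (S \ {u}) ∪ (G.neighborSet w \ S)) \ {w}) := by
  rintro x ⟨hx, y, ⟨hy, hyu⟩, hadj⟩
  by_cases hxu : x = u
  · exact Or.inl hxu
  have hxS : x ∉ S := fun h => hx ⟨Or.inl h, hxu⟩
  have hxw : x ∉ ({w} : Set V) := fun h => hx ⟨Or.inr h, hxu⟩
  rcases hy with hy | rfl
  · exact Or.inr ⟨Or.inl ⟨fun h => hxS h.1, y, ⟨hy, hyu⟩, hadj⟩, hxw⟩
  · exact Or.inr ⟨Or.inr ⟨hadj, hxS⟩, hxw⟩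

theorem Set.ncard_le_ncard_of_subset_union_diff {α : Type*} [Finite α] {A B X Y : Set α}
    (hA : A ⊆ X ∪ (B \ Y)) (hY : Y ⊆ B) (hXY : X.ncard ≤ Y.ncard) : A.ncard ≤ B.ncard := by
  have hYB : Y.ncard ≤ B.ncard := Set.ncard_le_ncard hY
  calc A.ncard ≤ (X ∪ (B \ Y)).ncard := Set.ncard_le_ncard hA
    _ ≤ X.ncard + (B \ Y).ncard := Set.ncard_union_le _ _
    _ = X.ncard + (B.ncard - Y.ncard) := by rw [Set.ncard_sdiff hY]
    _ ≤ B.ncard := by omega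

namespace QV

variable {q d : ℕ}

theorem IsChildOf.length_eq {w u : QV q d} (h : IsChildOf w u) :
    w.val.length = u.val.length + 1 := by
  obtain ⟨a, ha⟩ := h
  simp [ha]

theorem IsChildOf.unique_parent {w x y : QV q d} (hx : IsChildOf w x) (hy : IsChildOf w y) :
    x = y := by
  obtain ⟨a, ha⟩ := hx
  obtain ⟨b, hb⟩ := hy
  exact Subtype.ext (List.append_inj' (ha.symm.trans hb) rfl).1

theorem exists_isChildOf_of_ne_nil {w : QV q d} (hw : w.val ≠ []) : ∃ p, IsChildOf w p :=
  ⟨⟨w.val.dropLast, (List.dropLast_prefix _).length_le.trans w.2⟩,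
    w.val.getLast hw, (List.dropLast_append_getLast hw).symm⟩

theorem exists_mem_forall_isChildOf_not_mem {D : Set (QV q d)} (hD : D.Nonempty) :
    ∃ w ∈ D, ∀ c, IsChildOf c w → c ∉ D := by
  obtain ⟨w, hw, hmax⟩ := D.exists_max_image (fun w => w.val.length) D.toFinite hD
  exact ⟨w, hw, fun c hc hcD => by have := hmax c hcD; have := hc.length_eq; omega⟩

theorem LeftOf.isChildOf {x y c s : QV q d} (h : LeftOf x y) (hc : IsChildOf c x)
    (hs : IsChildOf s y) : LeftOf c s := by
  obtain ⟨a, ha⟩ := hc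
  obtain ⟨b, hb⟩ := hs
  refine ⟨by simp [ha, hb, h.1], ?_⟩
  rw [ha, hb]
  exact h.2.append_of_length_eq h.1 _ _

theorem leftOf_or_leftOf_of_length_eq {x y : QV q d} (hlen : x.val.length = y.val.length)
    (hne : x ≠ y) : LeftOf x y ∨ LeftOf y x :=
  (lt_or_gt_of_ne fun h => hne (Subtype.ext h)).imp (⟨hlen, ·⟩) (⟨hlen.symm, ·⟩)

theorem LeftOrdered.mem_of_leftOf {S : Set (QV q d)} (hlo : LeftOrdered S) {x y : QV q d}
    (h : LeftOf x y) (hy : y ∈ S) : x ∈ S :=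
  by_contra fun hx => hlo _ x y rfl ⟨h, Or.inl ⟨hx, hy⟩⟩

namespace DownCompressed

variable {S : Set (QV q d)}

theorem exists_isChildOf_not_mem (hdc : DownCompressed S) {u w p : QV q d} (hu : u ∈ S)
    (hw : w ∉ S) (hp : IsChildOf w p) (hlen : u.val.length < w.val.length) {Y : Set (QV q d)}
    (hYB : Y ⊆ vertexBorder (qTree q d) S)
    (hY : ∀ y ∈ Y, y = w ∨ ∀ x ∈ S, (qTree q d).Adj x y → x = u)
    (hcard : ({u, p} : Set (QV q d)).ncard ≤ Y.ncard) :
    ∃ c, IsChildOf c w ∧ c ∉ S := by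
  by_contra! hchildren
  have hsub : vertexBorder (qTree q d) ((S ∪ {w}) \ {u}) ⊆
      {u, p} ∪ (vertexBorder (qTree q d) S \ Y) := by
    intro x hx
    rcases vertexBorder_swap_subset _ _ _ _ hx with rfl | ⟨hx | ⟨hadj, hxS⟩, hxw⟩
    · exact Or.inl (Or.inl rfl)
    · obtain ⟨hxS, y, ⟨hyS, hyu⟩, hadj⟩ := hx
      by_cases hxu : x = u
      · exact Or.inl (Or.inl hxu)
      refine Or.inr ⟨⟨fun h => hxS ⟨h, hxu⟩, y, hyS, hadj⟩, fun hxY => ?_⟩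
      rcases hY x hxY with hxw' | hpriv
      · exact hxw hxw'
      · exact hyu (hpriv y hyS hadj)
    · rcases hadj with hxw' | hwx
      · exact absurd (hchildren x hxw') hxS
      · exact Or.inl (Or.inr (IsChildOf.unique_parent hwx hp))
  have hle := Set.ncard_le_ncard_of_subset_union_diff hsub hYB hcard
  exact (hdc u hu w hw).2 hlen |>.not_ge hle

theorem exists_isChildOf_not_mem_of_isChildOf (hdc : DownCompressed S) {u v : QV q d}
    (hu : u ∈ S) (hv : IsChildOf v u) (hvS : v ∉ S) : ∃ c, IsChildOf c v ∧ c ∉ S :=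
  hdc.exists_isChildOf_not_mem hu hvS hv (by simp [hv.length_eq])
    (Set.singleton_subset_iff.mpr ⟨hvS, u, hu, Or.inl hv⟩) (by simp) (by simp)

theorem eq_of_forall_isChildOf_not_mem (hdc : DownCompressed S) {u v₁ v₂ : QV q d}
    (hu : u ∈ S) (h₁ : IsChildOf v₁ u) (h₂ : IsChildOf v₂ u) (h₁S : v₁ ∉ S) (h₂S : v₂ ∉ S)
    (h₁c : ∀ w, IsChildOf w v₁ → w ∉ S) (h₂c : ∀ w, IsChildOf w v₂ → w ∉ S) : v₁ = v₂ := by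
  by_contra hne
  have hprivate : ∀ v, IsChildOf v u → (∀ w, IsChildOf w v → w ∉ S) →
      ∀ x ∈ S, (qTree q d).Adj x v → x = u := by
    rintro v hv hvc x hxS (hux | hxv)
    · exact IsChildOf.unique_parent hux hv
    · exact absurd hxS (hvc x hxv)
  obtain ⟨w, ⟨hwS, hlen⟩, hdeepest⟩ := exists_mem_forall_isChildOf_not_mem
    (D := {w | w ∉ S ∧ u.val.length < w.val.length}) ⟨v₂, h₂S, by simp [h₂.length_eq]⟩
  obtain ⟨p, hp⟩ := exists_isChildOf_of_ne_nil (w := w) fun h => by simp [h] at hlen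
  obtain ⟨c, hc, hcS⟩ := hdc.exists_isChildOf_not_mem hu hwS hp hlen (Y := {v₁, v₂})
    (Set.insert_subset ⟨h₁S, u, hu, Or.inl h₁⟩
      (Set.singleton_subset_iff.mpr ⟨h₂S, u, hu, Or.inl h₂⟩))
    (by rintro y (rfl | rfl); exacts [Or.inr (hprivate y h₁ h₁c), Or.inr (hprivate y h₂ h₂c)])
    ((Set.ncard_insert_le _ _).trans (by simp [Set.ncard_pair hne]))
  exact hdeepest c hc ⟨hcS, by simp [hc.length_eq]; omega⟩

end DownCompressed

theorem LeftOrdered.forall_isChildOf_not_mem_of_leftOf {S : Set (QV q d)}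
    (hlo : LeftOrdered S) (hdc : DownCompressed S) {u v v' : QV q d} (hu : u ∈ S)
    (hv : IsChildOf v u) (hvv' : LeftOf v v') (hvS : v ∉ S) :
    ∀ w, IsChildOf w v' → w ∉ S := by
  intro w hw hwS
  obtain ⟨c, hc, hcS⟩ := hdc.exists_isChildOf_not_mem_of_isChildOf hu hv hvS
  exact hcS (hlo.mem_of_leftOf (hvv'.isChildOf hc hw) hwS)

theorem exists_isChildOf_mem_iff_not {S : Set (QV q d)} (hlo : LeftOrdered S)
    (hdc : DownCompressed S) {u : QV q d} (hu : u ∈ S) {v v' : QV q d} (hv : IsChildOf v u)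
    (hv' : IsChildOf v' u) (hne : v ≠ v') (hvS : v ∉ S) (hv'S : v' ∉ S) :
    (∃ w, IsChildOf w v ∧ w ∈ S) ↔ ¬∃ w, IsChildOf w v' ∧ w ∈ S := by
  have hlen : v.val.length = v'.val.length := by rw [hv.length_eq, hv'.length_eq]
  rcases leftOf_or_leftOf_of_length_eq hlen hne with hvv' | hv'v
  · have hv'c := hlo.forall_isChildOf_not_mem_of_leftOf hdc hu hv hvv' hvS
    refine iff_of_true (by_contra fun hvc => hne ?_) fun ⟨w, hw, hwS⟩ => hv'c w hw hwS
    exact hdc.eq_of_forall_isChildOf_not_mem hu hv hv' hvS hv'S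
      (fun w hw hwS => hvc ⟨w, hw, hwS⟩) hv'c
  · have hvc := hlo.forall_isChildOf_not_mem_of_leftOf hdc hu hv' hv'v hv'S
    refine iff_of_false (fun ⟨w, hw, hwS⟩ => hvc w hw hwS)
      (not_not.mpr (by_contra fun hv'c => hne ?_))
    exact hdc.eq_of_forall_isChildOf_not_mem hu hv hv' hvS hv'S hvc
      (fun w hw hwS => hv'c ⟨w, hw, hwS⟩)

end QV

theorem down_compressed_children_trichotomy_general (q d : ℕ)
    (S : Set (QV q d)) (hlo : QV.LeftOrdered S) (hdc : QV.DownCompressed S)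
    (u : QV q d) (hu : u ∈ S) :
    (∀ w, QV.IsChildOf w u → w ∈ S) ∨
    (∃ v, QV.IsChildOf v u ∧ v ∉ S ∧ (∀ w, QV.IsChildOf w u → w ∉ S → w = v) ∧
      ∃ w, QV.IsChildOf w v ∧ w ∉ S) ∨
    (∃ v₁ v₂, v₁ ≠ v₂ ∧ QV.IsChildOf v₁ u ∧ QV.IsChildOf v₂ u ∧ v₁ ∉ S ∧ v₂ ∉ S ∧
      (∀ w, QV.IsChildOf w u → w ∉ S → w = v₁ ∨ w = v₂) ∧
      (∃ w, QV.IsChildOf w v₁ ∧ w ∈ S) ∧ (∃ w, QV.IsChildOf w v₁ ∧ w ∉ S) ∧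
      (∀ w, QV.IsChildOf w v₂ → w ∉ S)) := by
  by_cases hall : ∀ w, QV.IsChildOf w u → w ∈ S
  · exact Or.inl hall
  obtain ⟨v, hv, hvS⟩ : ∃ v, QV.IsChildOf v u ∧ v ∉ S := by simpa using hall
  have hgrand : ∀ {v}, QV.IsChildOf v u → v ∉ S → ∃ c, QV.IsChildOf c v ∧ c ∉ S :=
    hdc.exists_isChildOf_not_mem_of_isChildOf hu
  by_cases hsecond : ∃ v', QV.IsChildOf v' u ∧ v' ∉ S ∧ v' ≠ v
  · obtain ⟨v', hv', hv'S, hne⟩ := hsecond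
    have hiff := @QV.exists_isChildOf_mem_iff_not _ _ _ hlo hdc _ hu
    have hthird : ∀ w, QV.IsChildOf w u → w ∉ S → w = v ∨ w = v' := by
      intro w hw hwS
      by_contra! h
      have := hiff hw hv h.1 hwS hvS
      have := hiff hw hv' h.2 hwS hv'S
      have := hiff hv hv' hne.symm hvS hv'S
      grind
    right; right
    by_cases hvc : ∃ w, QV.IsChildOf w v ∧ w ∈ S
    · exact ⟨v, v', hne.symm, hv, hv', hvS, hv'S, hthird, hvc, hgrand hv hvS,
        fun w hw hwS => (hiff hv hv' hne.symm hvS hv'S).1 hvc ⟨w, hw, hwS⟩⟩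
    · exact ⟨v', v, hne, hv', hv, hv'S, hvS, fun w hw hwS => (hthird w hw hwS).symm,
        (hiff hv' hv hne hv'S hvS).2 hvc, hgrand hv' hv'S,
        fun w hw hwS => hvc ⟨w, hw, hwS⟩⟩
  · refine Or.inr (Or.inl ⟨v, hv, hvS, fun w hw hwS => ?_, hgrand hv hvS⟩)
    by_contra hwv
    exact hsecond ⟨w, hw, hwS, hwv⟩

theorem down_compressed_children_trichotomy (q d : ℕ) (hq : 2 ≤ q) (hd : 1 ≤ d)
    (S : Set (QV q d)) (hlo : QV.LeftOrdered S) (hdc : QV.DownCompressed S)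
    (u : QV q d) (hu : u ∈ S) :
    (∀ w, QV.IsChildOf w u → w ∈ S) ∨
    (∃ v, QV.IsChildOf v u ∧ v ∉ S ∧ (∀ w, QV.IsChildOf w u → w ∉ S → w = v) ∧
      ∃ w, QV.IsChildOf w v ∧ w ∉ S) ∨
    (∃ v₁ v₂, v₁ ≠ v₂ ∧ QV.IsChildOf v₁ u ∧ QV.IsChildOf v₂ u ∧ v₁ ∉ S ∧ v₂ ∉ S ∧
      (∀ w, QV.IsChildOf w u → w ∉ S → w = v₁ ∨ w = v₂) ∧
      (∃ w, QV.IsChildOf w v₁ ∧ w ∈ S) ∧ (∃ w, QV.IsChildOf w v₁ ∧ w ∉ S) ∧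
      (∀ w, QV.IsChildOf w v₂ → w ∉ S)) :=
  down_compressed_children_trichotomy_general q d S hlo hdc u hu
end
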